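/- Let n ≥ 1 and let N be a compact subset of ℝ^{n+2} which, with the subspace topology, is a topological n-manifold (every point of N has an open neighborhood in N homeomorphic to ℝ^n), and suppose N is contained in the n-skeleton of the canonical cubulation of ℝ^{n+2}, i.e. every point of N has at most n non-integer coordinates. Then there exists an ambient isotopy H of ℝ^{n+2} such that H(1,·)(N) is contained in the Menger continuum M^{n+2}_n. -/

import Mathlib

/-- The Menger continuum `M^m_n`: points of the unit cube admitting a triadic digit
expansion in which, at every level, at most `n` digits equal `1`. -/
def mengerSet (m n : ℕ) : Set (EuclideanSpace ℝ (Fin m)) :=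
  {x | ∃ a : ℕ → Fin m → Fin 3,
    (∀ i, x i = ∑' k : ℕ, ((a k i : ℕ) : ℝ) / 3 ^ (k + 1)) ∧
    ∀ k, ({i | a k i = 1} : Set (Fin m)).ncard ≤ n}

/-- An ambient isotopy of `ℝ^m`: continuous on `[0,1] × ℝ^m`, starting at the identity,
with every time slice a homeomorphism. -/
def IsAmbientIsotopy {m : ℕ}
    (H : ℝ → EuclideanSpace ℝ (Fin m) → EuclideanSpace ℝ (Fin m)) : Prop :=
  ContinuousOn (fun p : ℝ × EuclideanSpace ℝ (Fin m) => H p.1 p.2)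
    (Set.Icc 0 1 ×ˢ Set.univ) ∧
  H 0 = id ∧
  ∀ t ∈ Set.Icc (0 : ℝ) 1, IsHomeomorph (H t)

namespace MengerAux

open Filter Finset Real

lemma sum_range_two_div (M : ℕ) :
    ∑ k ∈ Finset.range M, (2:ℝ)/3^(k+1) = 1 - (1/3)^M := by
  induction M with
  | zero => simp
  | succ M ih =>
    rw [Finset.sum_range_succ, ih]
    rw [one_div_pow, one_div_pow]; field_simp
    ring

lemma tsum_prefix_two (M : ℕ) :
    ∑' k : ℕ, (((if k < M then (2 : Fin 3) else 0) : ℕ) : ℝ) / 3 ^ (k + 1)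
      = 1 - (1/3)^M := by
  rw [tsum_eq_sum (s := Finset.range M)
    (by intro b hb; simp at hb; simp [Nat.not_lt.2 hb])]
  rw [← sum_range_two_div M]
  apply Finset.sum_congr rfl
  intro k hk
  simp at hk
  simp [hk]

lemma exists_triadic (y : ℝ) (h0 : 0 ≤ y) (h1 : y ≤ 1) :
    ∃ a : ℕ → Fin 3, y = ∑' k : ℕ, ((a k : ℕ) : ℝ) / 3 ^ (k + 1) := by
  rcases eq_or_lt_of_le h1 with h1 | h1
  · -- y = 1, all digits 2
    refine ⟨fun _ => 2, ?_⟩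
    have : ∀ k : ℕ, (((2 : Fin 3) : ℕ) : ℝ) / 3 ^ (k+1) = (2/3) * (1/3)^k := by
      intro k; rw [one_div_pow]; field_simp; norm_num; ring
    rw [tsum_congr this, tsum_mul_left, tsum_geometric_of_lt_one (by norm_num) (by norm_num)]
    rw [h1]; norm_num
  · set b : ℕ → ℤ := fun k => ⌊3^k * y⌋ with hb
    have hb0 : b 0 = 0 := by simp [hb, Int.floor_eq_zero_iff, h0, h1, Set.mem_Ico]
    have hfl : ∀ k, 3 * b k ≤ b (k+1) ∧ b (k+1) < 3 * b k + 3 := by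
      intro k
      have h3 : (3:ℝ)^(k+1) * y = 3 * (3^k * y) := by ring
      constructor
      · apply Int.le_floor.2
        push_cast
        rw [h3]
        have := Int.floor_le (3^k * y)
        nlinarith
      · apply Int.floor_lt.2
        push_cast
        rw [h3]
        have := Int.lt_floor_add_one (3^k * y)
        nlinarith
    set d : ℕ → ℤ := fun k => b (k+1) - 3 * b k with hd
    have hd0 : ∀ k, 0 ≤ d k := fun k => by have := (hfl k).1; simp [hd]; linarith
    have hd2 : ∀ k, d k < 3 := fun k => by have := (hfl k).2; simp [hd]; linarith
    refine ⟨fun k => ⟨(d k).toNat, by have := hd0 k; have := hd2 k; omega⟩, ?_⟩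
    have hcast : ∀ k, ((((d k).toNat : ℕ)) : ℝ) = (d k : ℝ) := by
      intro k; exact_mod_cast congrArg (fun z : ℤ => (z:ℝ)) (Int.toNat_of_nonneg (hd0 k))
    have hpart : ∀ K : ℕ, ∑ k ∈ Finset.range K, ((d k : ℝ)) / 3^(k+1) = (b K : ℝ) / 3^K := by
      intro K
      induction K with
      | zero => simp [hb0]
      | succ K ih =>
        rw [Finset.sum_range_succ, ih]
        have : (d K : ℝ) = (b (K+1) : ℝ) - 3 * (b K : ℝ) := by push_cast [hd]; ring
        rw [this]
        field_simp
        ring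
    have hlim : Tendsto (fun K : ℕ => (b K : ℝ) / 3^K) atTop (nhds y) := by
      apply tendsto_of_tendsto_of_tendsto_of_le_of_le (g := fun K : ℕ => y - (1/3:ℝ)^K)
        (h := fun _ : ℕ => y)
      · have := (tendsto_pow_atTop_nhds_zero_of_lt_one (r := (1/3:ℝ)) (by norm_num) (by norm_num))
        simpa using tendsto_const_nhds.sub this
      · exact tendsto_const_nhds
      · intro K
        have h1 := Int.lt_floor_add_one ((3:ℝ)^K * y)
        have hp : (0:ℝ) < 3^K := by positivity
        have key : 3^K * y ≤ (b K:ℝ) + 1 := by simp only [hb]; linarith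
        have hq : ((1:ℝ)/3)^K = 1/3^K := by rw [div_pow]; norm_num
        show y - (1/3:ℝ)^K ≤ (b K:ℝ)/3^K
        rw [hq, sub_le_iff_le_add, ← add_div, le_div_iff₀ hp]
        linarith
      · intro K
        have h2 := Int.floor_le ((3:ℝ)^K * y)
        have hp : (0:ℝ) < 3^K := by positivity
        show (b K : ℝ) / 3^K ≤ y
        rw [div_le_iff₀ hp]
        simp only [hb]
        nlinarith
    have hnn : ∀ k : ℕ, (0:ℝ) ≤ (d k : ℝ) / 3^(k+1) := by
      intro k
      have := hd0 k
      positivity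
    have hs : HasSum (fun k : ℕ => (d k : ℝ)/3^(k+1)) y := by
      rw [hasSum_iff_tendsto_nat_of_nonneg hnn]
      simpa [hpart] using hlim
    refine hs.tsum_eq.symm.trans ?_
    apply tsum_congr
    intro k
    simp [hcast k]

noncomputable def hmap (A : ℕ) (s : ℝ) : ℝ :=
  1 - Real.exp (-(s + A + 1) * Real.log 3) + max 0 (s - A) + min 0 (s + A)

lemma hmap_strictMono (A : ℕ) : StrictMono (hmap A) := by
  have h1 : StrictMono (fun s : ℝ => 1 - Real.exp (-(s + A + 1) * Real.log 3)) := by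
    intro a b hab
    have hL : 0 < Real.log 3 := Real.log_pos (by norm_num)
    have : Real.exp (-(b + A + 1) * Real.log 3) < Real.exp (-(a + A + 1) * Real.log 3) := by
      apply Real.exp_lt_exp.2
      nlinarith
    simpa using this
  have h2 : Monotone (fun s : ℝ => max 0 (s - A) + min 0 (s + A)) := by
    apply Monotone.add
    · exact monotone_const.max (fun a b hab => by simpa using hab)
    · exact monotone_const.min (fun a b hab => by simpa using hab)
  have := h1.add_monotone h2
  convert this using 2 with s
  simp [hmap]
  ring

lemma hmap_continuous (A : ℕ) : Continuous (hmap A) := by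
  unfold hmap
  fun_prop

lemma hmap_on_Icc (A : ℕ) (s : ℝ) (h1 : -A ≤ s) (h2 : s ≤ A) :
    hmap A s = 1 - Real.exp (-(s + A + 1) * Real.log 3) ∧
      0 ≤ hmap A s ∧ hmap A s ≤ 1 := by
  have hmax : max 0 (s - A) = 0 := max_eq_left (by linarith)
  have hmin : min 0 (s + A) = 0 := min_eq_left (by linarith)
  have heq : hmap A s = 1 - Real.exp (-(s + A + 1) * Real.log 3) := by
    rw [hmap, hmax, hmin]; ring
  have hL : 0 < Real.log 3 := Real.log_pos (by norm_num)
  have hle : Real.exp (-(s + A + 1) * Real.log 3) ≤ 1 := by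
    rw [Real.exp_le_one_iff]
    nlinarith
  have hpos : 0 < Real.exp (-(s + A + 1) * Real.log 3) := Real.exp_pos _
  exact ⟨heq, by rw [heq]; linarith, by rw [heq]; linarith⟩

lemma hmap_int (A : ℕ) (z : ℤ) (h1 : -(A:ℝ) ≤ z) (h2 : (z:ℝ) ≤ A) :
    hmap A z = 1 - (1/3:ℝ) ^ (z + A + 1).toNat := by
  have hM : ((z + A + 1).toNat : ℝ) = (z:ℝ) + A + 1 := by
    have : (0:ℤ) ≤ z + A + 1 := by
      have : -(A:ℤ) ≤ z := by exact_mod_cast h1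
      omega
    exact_mod_cast congrArg (fun t : ℤ => (t:ℝ)) (Int.toNat_of_nonneg this)
  have := (hmap_on_Icc A z h1 h2).1
  rw [this]
  congr 1
  rw [show -((z:ℝ) + A + 1) * Real.log 3 = ((z + A + 1).toNat : ℝ) * (-Real.log 3) by
    rw [hM]; ring]
  rw [Real.exp_nat_mul, Real.exp_neg, Real.exp_log (by norm_num)]
  norm_num

lemma hmap_ge (A : ℕ) (s : ℝ) (h : -(A:ℝ) ≤ s) : s - A ≤ hmap A s := by
  have hL : 0 < Real.log 3 := Real.log_pos (by norm_num)
  have h1 : Real.exp (-(s + A + 1) * Real.log 3) ≤ 1 := by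
    rw [Real.exp_le_one_iff]; nlinarith
  have h2 : s - A ≤ max 0 (s - A) := le_max_right _ _
  have h3 : min 0 (s + A) = 0 := min_eq_left (by linarith)
  rw [hmap, h3]
  linarith

lemma hmap_le (A : ℕ) (s : ℝ) (h : s ≤ -(A:ℝ)) : hmap A s ≤ s + A + 1 := by
  have h1 : 0 < Real.exp (-(s + A + 1) * Real.log 3) := Real.exp_pos _
  have h2 : max 0 (s - A) = 0 := max_eq_left (by linarith)
  have h3 : min 0 (s + A) = s + A := min_eq_right (by linarith)
  rw [hmap, h2, h3]
  linarith

lemma phi_strictMono (A : ℕ) (t : ℝ) (ht0 : 0 ≤ t) (ht1 : t ≤ 1) :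
    StrictMono (fun s : ℝ => (1 - t) * s + t * hmap A s) := by
  intro a b hab
  rcases eq_or_lt_of_le ht0 with h | h
  · simp only [← h]
    simpa using hab
  · have h1 : (1 - t) * a ≤ (1 - t) * b :=
      mul_le_mul_of_nonneg_left hab.le (by linarith)
    have h2 : t * hmap A a < t * hmap A b :=
      mul_lt_mul_of_pos_left (hmap_strictMono A hab) h
    dsimp only
    linarith

lemma phi_continuous (A : ℕ) (t : ℝ) :
    Continuous (fun s : ℝ => (1 - t) * s + t * hmap A s) := by
  have := hmap_continuous A
  fun_prop

lemma phi_surjective (A : ℕ) (t : ℝ) (ht0 : 0 ≤ t) (ht1 : t ≤ 1) :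
    Function.Surjective (fun s : ℝ => (1 - t) * s + t * hmap A s) := by
  have hA : (0:ℝ) ≤ (A:ℝ) := Nat.cast_nonneg A
  apply Continuous.surjective (phi_continuous A t)
  · apply tendsto_atTop_mono' _ _ (tendsto_atTop_add_const_right atTop (-(A:ℝ)) tendsto_id)
    filter_upwards [eventually_ge_atTop (-(A:ℝ))] with s hs
    have h1 := hmap_ge A s hs
    have h2 := mul_le_mul_of_nonneg_left h1 ht0
    show id s + (-(A:ℝ)) ≤ (1 - t) * s + t * hmap A s
    simp only [id]
    nlinarith
  · apply tendsto_atBot_mono' _ _ (tendsto_atBot_add_const_right atBot ((A:ℝ)+1) tendsto_id)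
    filter_upwards [eventually_le_atBot (-(A:ℝ))] with s hs
    have h1 := hmap_le A s hs
    have h2 := mul_le_mul_of_nonneg_left h1 ht0
    show (1 - t) * s + t * hmap A s ≤ id s + ((A:ℝ)+1)
    simp only [id]
    nlinarith

end MengerAux

open MengerAux Filter in
/-- A compact cubical `n`-submanifold of `ℝ^{n+2}` (contained in the `n`-skeleton of the
canonical cubulation) can be moved by an ambient isotopy into the Menger continuum
`M^{n+2}_n`. -/
theorem cubical_submanifold_isotopic_into_menger (n : ℕ) (hn : 1 ≤ n)
    (N : Set (EuclideanSpace ℝ (Fin (n + 2)))) (hNcpt : IsCompact N)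
    (hman : ∀ x (hx : x ∈ N), ∃ U : Set N, IsOpen U ∧ (⟨x, hx⟩ : N) ∈ U ∧
      Nonempty (U ≃ₜ (Fin n → ℝ)))
    (hskel : ∀ x ∈ N, ({i | ¬ ∃ z : ℤ, x i = (z : ℝ)} : Set (Fin (n + 2))).ncard ≤ n) :
    ∃ H : ℝ → EuclideanSpace ℝ (Fin (n + 2)) → EuclideanSpace ℝ (Fin (n + 2)),
      IsAmbientIsotopy H ∧ H 1 '' N ⊆ mengerSet (n + 2) n := by
  classical
  obtain ⟨C, hC⟩ := hNcpt.exists_bound_of_continuousOn continuousOn_id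
  set A : ℕ := ⌈C⌉₊ with hA
  -- coordinatewise bound
  have hbound : ∀ x ∈ N, ∀ i, |x i| ≤ (A:ℝ) := by
    intro x hx i
    have h1 : |x i| ≤ ‖x‖ := by
      rw [EuclideanSpace.norm_eq]
      have h2 : ‖x i‖^2 ≤ ∑ j, ‖x j‖^2 :=
        Finset.single_le_sum (fun j _ => sq_nonneg ‖x j‖) (Finset.mem_univ i)
      calc |x i| = Real.sqrt (‖x i‖^2) := by
            rw [Real.sqrt_sq (norm_nonneg _)]; exact (Real.norm_eq_abs _).symm
        _ ≤ _ := Real.sqrt_le_sqrt h2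
    calc |x i| ≤ ‖x‖ := h1
      _ ≤ C := by simpa using hC x hx
      _ ≤ (A:ℝ) := Nat.le_ceil C
  set H : ℝ → EuclideanSpace ℝ (Fin (n + 2)) → EuclideanSpace ℝ (Fin (n + 2)) :=
    fun t x => WithLp.toLp 2 (fun i => (1 - t) * x i + t * hmap A (x i)) with hH
  refine ⟨H, ⟨?_, ?_, ?_⟩, ?_⟩
  · -- continuity
    apply Continuous.continuousOn
    apply (PiLp.continuous_toLp _ _).comp
    apply continuous_pi
    intro i
    have h2 : Continuous fun p : ℝ × EuclideanSpace ℝ (Fin (n+2)) => p.2 i :=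
      (continuous_apply i).comp ((PiLp.continuous_ofLp _ _).comp continuous_snd)
    have := hmap_continuous A
    fun_prop
  · -- identity at 0
    funext x
    ext i
    show (1 - 0) * x i + 0 * hmap A (x i) = x i
    ring
  · -- slices are homeomorphisms
    rintro t ⟨ht0, ht1⟩
    set e : ℝ ≃ₜ ℝ :=
      (StrictMono.orderIsoOfSurjective _ (phi_strictMono A t ht0 ht1)
        (phi_surjective A t ht0 ht1)).toHomeomorph with he
    have : H t = ⇑((PiLp.homeomorph 2 (fun _ : Fin (n+2) => ℝ)).trans
        ((Homeomorph.piCongrRight (fun _ : Fin (n+2) => e)).trans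
          (PiLp.homeomorph 2 (fun _ : Fin (n+2) => ℝ)).symm)) := by
      funext x
      ext i
      rfl
    rw [this]
    exact ((PiLp.homeomorph 2 (fun _ : Fin (n+2) => ℝ)).trans
        ((Homeomorph.piCongrRight (fun _ : Fin (n+2) => e)).trans
          (PiLp.homeomorph 2 (fun _ : Fin (n+2) => ℝ)).symm)).isHomeomorph
  · -- image lies in the Menger set
    rintro y ⟨x, hxN, rfl⟩
    have hxi : ∀ i, -(A:ℝ) ≤ x i ∧ x i ≤ (A:ℝ) := fun i => abs_le.1 (hbound x hxN i)
    have key : ∀ i : Fin (n+2), ∃ g : ℕ → Fin 3,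
        (hmap A (x i) = ∑' k : ℕ, ((g k : ℕ) : ℝ) / 3 ^ (k + 1)) ∧
        ((∃ z : ℤ, x i = (z:ℝ)) → ∀ k, g k ≠ 1) := by
      intro i
      by_cases hz : ∃ z : ℤ, x i = (z:ℝ)
      · obtain ⟨z, hzz⟩ := hz
        have hz1 : -(A:ℝ) ≤ (z:ℝ) := hzz ▸ (hxi i).1
        have hz2 : (z:ℝ) ≤ (A:ℝ) := hzz ▸ (hxi i).2
        refine ⟨fun k => if k < (z + A + 1).toNat then 2 else 0, ?_, ?_⟩
        · rw [hzz, hmap_int A z hz1 hz2, ← tsum_prefix_two]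
          apply tsum_congr
          intro k
          dsimp only
          split <;> simp
        · intro _ k
          dsimp only
          split <;> decide
      · obtain ⟨hicc1, hicc2⟩ := hxi i
        obtain ⟨g, hg⟩ := exists_triadic (hmap A (x i))
          (hmap_on_Icc A (x i) (by exact_mod_cast hicc1) hicc2).2.1
          (hmap_on_Icc A (x i) (by exact_mod_cast hicc1) hicc2).2.2
        exact ⟨g, hg, fun h => absurd h hz⟩
    choose g hg1 hg2 using key
    refine ⟨fun k i => g i k, ?_, ?_⟩
    · intro i
      have : H 1 x i = hmap A (x i) := by
        show (1 - 1) * x i + 1 * hmap A (x i) = hmap A (x i)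
        ring
      rw [this]
      exact hg1 i
    · intro k
      have hsub : ({i | g i k = 1} : Set (Fin (n+2))) ⊆
          {i | ¬ ∃ z : ℤ, x i = (z : ℝ)} := by
        intro i hi
        intro hz
        exact hg2 i hz k hi
      calc ({i | g i k = 1} : Set (Fin (n+2))).ncard
          ≤ ({i | ¬ ∃ z : ℤ, x i = (z : ℝ)} : Set (Fin (n+2))).ncard :=
            Set.ncard_le_ncard hsub (Set.toFinite _)
        _ ≤ n := hskel x hxN
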